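/- Let B be a strict bicategory in which every 1-morphism is strictly invertible (for each f : a ⟶ b there exists g : b ⟶ a with f ≫ g = 𝟙 a and g ≫ f = 𝟙 b). Then a 2-morphism α : f ⟶ g between 1-morphisms f, g : a ⟶ b is horizontally invertible if and only if it is vertically invertible. -/
import Mathlib
open CategoryTheory CategoryTheory.Bicategory

section helpers
variable {B : Type*} [Bicategory B] [Bicategory.Strict B]

private lemma wr_congr' {a b c : B} {x y : a ⟶ b} {s t : b ⟶ c} (e : s = t) (η : x ⟶ y) :
    η ▷ s = eqToHom (by rw [e]) ≫ η ▷ t ≫ eqToHom (by rw [e]) := by cases e; simp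

private lemma wl_congr' {a b c : B} {x y : b ⟶ c} {s t : a ⟶ b} (e : s = t) (η : x ⟶ y) :
    s ◁ η = eqToHom (by rw [e]) ≫ t ◁ η ≫ eqToHom (by rw [e]) := by cases e; simp

private lemma conj_wr' {a b c : B} {x y : a ⟶ b} (η : x ⟶ y) (p : b ⟶ c) (q : c ⟶ b)
    (h : p ≫ q = 𝟙 b) :
    (η ▷ p) ▷ q = eqToHom (by rw [Bicategory.Strict.assoc, h, Category.comp_id]) ≫ η ≫
      eqToHom (by rw [Bicategory.Strict.assoc, h, Category.comp_id]) := by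
  have h1 := whiskerRight_comp η p q
  rw [wr_congr' h η] at h1
  simp only [Bicategory.whiskerRight_id, Bicategory.Strict.rightUnitor_eqToIso,
    Bicategory.Strict.associator_eqToIso, eqToIso.hom, eqToIso.inv, eqToHom_trans,
    Category.assoc, eqToHom_trans_assoc] at h1
  replace h1 := h1.symm
  rw [eqToHom_comp_iff, comp_eqToHom_iff] at h1
  rw [h1]
  simp

private lemma conj_wl' {a b c : B} {x y : b ⟶ c} (η : x ⟶ y) (p : a ⟶ b) (q : b ⟶ a)
    (h : q ≫ p = 𝟙 b) :
    q ◁ (p ◁ η) = eqToHom (by rw [← Bicategory.Strict.assoc, h, Category.id_comp]) ≫ η ≫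
      eqToHom (by rw [← Bicategory.Strict.assoc, h, Category.id_comp]) := by
  have h1 := comp_whiskerLeft q p η
  rw [wl_congr' h η] at h1
  simp only [Bicategory.id_whiskerLeft, Bicategory.Strict.leftUnitor_eqToIso,
    Bicategory.Strict.associator_eqToIso, eqToIso.hom, eqToIso.inv, eqToHom_trans,
    Category.assoc, eqToHom_trans_assoc] at h1
  replace h1 := h1.symm
  rw [eqToHom_comp_iff, comp_eqToHom_iff] at h1
  rw [h1]
  simp
end helpers

/-- In a strict bicategory in which every 1-morphism is strictly invertible,
a 2-morphism is horizontally invertible if and only if it is vertically invertible. -/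
theorem strict_bicategory_horizontally_invertible_iff_vertically_invertible
    {B : Type*} [Bicategory B] [Bicategory.Strict B]
    (hinv : ∀ ⦃x y : B⦄ (f : x ⟶ y), ∃ g : y ⟶ x, f ≫ g = 𝟙 x ∧ g ≫ f = 𝟙 y)
    {a b : B} {f g : a ⟶ b} (α : f ⟶ g) :
    (∃ (f' g' : b ⟶ a) (hf₁ : f ≫ f' = 𝟙 a) (hf₂ : f' ≫ f = 𝟙 b)
        (hg₁ : g ≫ g' = 𝟙 a) (hg₂ : g' ≫ g = 𝟙 b) (β : f' ⟶ g'),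
        α ▷ f' ≫ g ◁ β = eqToHom hf₁ ≫ 𝟙 (𝟙 a) ≫ eqToHom hg₁.symm ∧
        β ▷ f ≫ g' ◁ α = eqToHom hf₂ ≫ 𝟙 (𝟙 b) ≫ eqToHom hg₂.symm) ↔
      IsIso α := by
  constructor
  · rintro ⟨f', g', hf₁, hf₂, hg₁, hg₂, β, h1, h2⟩
    simp only [Category.id_comp, eqToHom_trans] at h1 h2
    have e1 : f ≫ f' = g ≫ g' := hf₁.trans hg₁.symm
    have hr : α ▷ f' ≫ (g ◁ β ≫ eqToHom e1.symm) = 𝟙 (f ≫ f') := by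
      rw [← Category.assoc, h1]; simp
    have hr2 := congrArg (· ▷ f) hr
    simp only [Bicategory.comp_whiskerRight, Bicategory.id_whiskerRight,
      eqToHom_whiskerRight, Category.assoc] at hr2
    rw [conj_wr' α f' f hf₂] at hr2
    simp only [Category.assoc, eqToHom_comp_iff] at hr2
    -- hr2 : α ≫ (chain) = eqToHom _ ≫ 𝟙 _
    have e2 : f' ≫ f = g' ≫ g := hf₂.trans hg₂.symm
    have hl : (eqToHom e2.symm ≫ β ▷ f) ≫ g' ◁ α = 𝟙 (g' ≫ g) := by
      rw [Category.assoc, h2]; simp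
    have hl2 := congrArg (g ◁ ·) hl
    simp only [Bicategory.whiskerLeft_comp, Bicategory.whiskerLeft_id,
      whiskerLeft_eqToHom, Category.assoc] at hl2
    rw [conj_wl' α g' g hg₁] at hl2
    simp only [← Category.assoc] at hl2
    rw [comp_eqToHom_iff] at hl2
    -- hl2 : (chain) ≫ α = 𝟙 _ ≫ eqToHom _
    obtain ⟨y, hy⟩ : ∃ y, α ≫ y = eqToHom (show f = (f ≫ f') ≫ f by
        rw [Bicategory.Strict.assoc, hf₂, Category.comp_id]) := ⟨_, hr2.trans (by simp)⟩
    obtain ⟨x, hx⟩ : ∃ x, x ≫ α = eqToHom (show g ≫ g' ≫ g = g by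
        rw [← Bicategory.Strict.assoc, hg₁, Category.id_comp]) := ⟨_, hl2.trans (by simp)⟩
    refine ⟨⟨y ≫ eqToHom (show (f ≫ f') ≫ f = f by
        rw [Bicategory.Strict.assoc, hf₂, Category.comp_id]), ?_, ?_⟩⟩
    · rw [← Category.assoc, hy]; simp
    · have hxl : (eqToHom (show g = g ≫ g' ≫ g by
          rw [← Bicategory.Strict.assoc, hg₁, Category.id_comp]) ≫ x) ≫ α = 𝟙 g := by
        rw [Category.assoc, hx]; simp
      have : eqToHom (show g = g ≫ g' ≫ g by
          rw [← Bicategory.Strict.assoc, hg₁, Category.id_comp]) ≫ x =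
          y ≫ eqToHom (show (f ≫ f') ≫ f = f by
          rw [Bicategory.Strict.assoc, hf₂, Category.comp_id]) := by
        have := congrArg (· ≫ (y ≫ eqToHom (show (f ≫ f') ≫ f = f by
          rw [Bicategory.Strict.assoc, hf₂, Category.comp_id]))) hxl
        simp only [Category.id_comp, Category.assoc] at this
        rw [← Category.assoc α, hy] at this
        simpa using this
      rw [← this, Category.assoc, hx]; simp
  · intro hα
    obtain ⟨f', hf₁, hf₂⟩ := hinv f
    obtain ⟨g', hg₁, hg₂⟩ := hinv g
    have e1 : f' = (f' ≫ g) ≫ g' := by rw [Bicategory.Strict.assoc, hg₁, Category.comp_id]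
    have e2 : (f' ≫ f) ≫ g' = g' := by rw [hf₂, Category.id_comp]
    refine ⟨f', g', hf₁, hf₂, hg₁, hg₂,
      eqToHom e1 ≫ (f' ◁ inv α) ▷ g' ≫ eqToHom e2, ?_, ?_⟩
    · rw [← whisker_exchange]
      simp only [Bicategory.whiskerLeft_comp, whiskerLeft_eqToHom, Bicategory.whisker_assoc,
        Bicategory.Strict.associator_eqToIso, eqToIso.hom, eqToIso.inv, Category.assoc]
      rw [conj_wl' (inv α ▷ g') f' f hf₁]
      simp only [Category.assoc, eqToHom_trans, eqToHom_trans_assoc, eqToHom_refl,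
        Category.id_comp, Category.comp_id]
      rw [← Bicategory.comp_whiskerRight]
      simp
    · rw [← whisker_exchange]
      simp only [Bicategory.comp_whiskerRight, eqToHom_whiskerRight, Category.assoc]
      rw [conj_wr' (f' ◁ inv α) g' g hg₂]
      simp only [Category.assoc, eqToHom_trans, eqToHom_trans_assoc, eqToHom_refl,
        Category.id_comp, Category.comp_id]
      rw [← Bicategory.whiskerLeft_comp_assoc]
      simp
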